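/- Let n ≥ 2 and let R be a relation on a finite type V. Then every repair of R contains a closed walk of length n if and only if there exists a sink strongly connected component S of R such that every simple cycle of R with all its vertices in S has length dividing n. -/
import Mathlib


/-- A relation is consistent (satisfies the key constraint on the first attribute)
if it is functional. -/
def Consistent {V : Type*} (R : V → V → Prop) : Prop :=
  ∀ a b b', R a b → R a b' → b = b'

/-- `D` is a (subset) repair of `R`: a maximal consistent subrelation of `R`. -/
def Repair {V : Type*} (R D : V → V → Prop) : Prop :=
  (∀ a b, D a b → R a b) ∧ Consistent D ∧
  ∀ D' : V → V → Prop, Consistent D' → (∀ a b, D a b → D' a b) →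
    (∀ a b, D' a b → R a b) → D' = D

/-- A closed walk of length `n` in `D`: a map `ZMod n → V` following `D`-edges. -/
def IsClosedWalk {V : Type*} (D : V → V → Prop) (n : ℕ) (g : ZMod n → V) : Prop :=
  ∀ i, D (g i) (g (i + 1))

/-- A simple cycle of length `k` in `D`: an injective closed walk `ZMod k → V`. -/
def IsSimpleCycle {V : Type*} (D : V → V → Prop) (k : ℕ) (g : ZMod k → V) : Prop :=
  Function.Injective g ∧ ∀ i, D (g i) (g (i + 1))

/-- A sink strongly connected component of `R`. -/
def SinkSCC {V : Type*} (R : V → V → Prop) (S : Set V) : Prop :=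
  S.Nonempty ∧ (∀ a ∈ S, ∀ b ∈ S, Relation.ReflTransGen R a b) ∧
  (∀ a ∈ S, ∃ b, R a b) ∧ (∀ a ∈ S, ∀ b, R a b → b ∈ S)

section Aux

variable {V : Type*}

def Reach5 (R : V → V → Prop) (v : V) : Set V := {w | Relation.ReflTransGen R v w}

theorem reach5_self (R : V → V → Prop) (v : V) : v ∈ Reach5 R v := Relation.ReflTransGen.refl

theorem reach5_trans {R : V → V → Prop} {u v w : V} (h : v ∈ Reach5 R u)
    (h2 : w ∈ Reach5 R v) : w ∈ Reach5 R u := Relation.ReflTransGen.trans h h2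

theorem sinkSCC_reach_eq {R : V → V → Prop} {S : Set V} (hS : SinkSCC R S) {v : V}
    (hv : v ∈ S) : Reach5 R v = S := by
  ext w
  constructor
  · intro hw
    induction hw with
    | refl => exact hv
    | tail _ h2 ih => exact hS.2.2.2 _ ih _ h2
  · intro hw
    exact hS.2.1 v hv w hw

def ReachIn (R : V → V → Prop) (C : Set V) : ℕ → V → Prop
  | 0, v => v ∈ C
  | m+1, v => ∃ w, R v w ∧ ReachIn R C m w

theorem reachIn_zero {R : V → V → Prop} {C : Set V} {v : V} :
    ReachIn R C 0 v ↔ v ∈ C := Iff.rfl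

theorem reachIn_succ {R : V → V → Prop} {C : Set V} {m : ℕ} {v : V} :
    ReachIn R C (m+1) v ↔ ∃ w, R v w ∧ ReachIn R C m w := Iff.rfl

theorem reachIn_of_rtg {R : V → V → Prop} {C : Set V} {v w : V}
    (h : Relation.ReflTransGen R v w) (hw : w ∈ C) : ∃ m, ReachIn R C m v := by
  induction h using Relation.ReflTransGen.head_induction_on with
  | refl => exact ⟨0, hw⟩
  | head h1 _ ih => obtain ⟨m, hm⟩ := ih; exact ⟨m+1, _, h1, hm⟩

noncomputable def dC (R : V → V → Prop) (C : Set V) (v : V) : ℕ :=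
  sInf {m | ReachIn R C m v}

theorem dC_step {R : V → V → Prop} {C : Set V} {v : V} (hv : v ∉ C)
    (h : ∃ m, ReachIn R C m v) : ∃ w, R v w ∧ dC R C w < dC R C v := by
  have hmem : ReachIn R C (dC R C v) v := Nat.sInf_mem h
  rcases hd : dC R C v with _ | m
  · rw [hd] at hmem
    exact absurd (reachIn_zero.mp hmem) hv
  · rw [hd] at hmem
    obtain ⟨w, hRw, hw⟩ := reachIn_succ.mp hmem
    refine ⟨w, hRw, ?_⟩
    have : dC R C w ≤ m := Nat.sInf_le hw
    omega

open Classical in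
noncomputable def nxt (R : V → V → Prop) (C : Set V) (K : Set V → ℕ)
    (G : (S : Set V) → ZMod (K S) → V) (v : V) : V :=
  if h1 : SinkSCC R (Reach5 R v) ∧ ∃ i, G (Reach5 R v) i = v then
    G (Reach5 R v) (Classical.choose h1.2 + 1)
  else if h2 : ∃ w, R v w ∧ dC R C w < dC R C v then Classical.choose h2
  else if h3 : ∃ w, R v w then Classical.choose h3 else v

theorem nxt_pos {R : V → V → Prop} {C : Set V} {K : Set V → ℕ}
    {G : (S : Set V) → ZMod (K S) → V} {v : V}
    (h1 : SinkSCC R (Reach5 R v) ∧ ∃ i, G (Reach5 R v) i = v) :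
    nxt R C K G v = G (Reach5 R v) (Classical.choose h1.2 + 1) := dif_pos h1

theorem nxt_neg3 {R : V → V → Prop} {C : Set V} {K : Set V → ℕ}
    {G : (S : Set V) → ZMod (K S) → V} {v : V}
    (h1 : ¬(SinkSCC R (Reach5 R v) ∧ ∃ i, G (Reach5 R v) i = v))
    (h2 : ¬∃ w, R v w ∧ dC R C w < dC R C v) (h3 : ∃ w, R v w) :
    nxt R C K G v = Classical.choose h3 := by
  unfold nxt
  rw [dif_neg h1, dif_neg h2, dif_pos h3]

theorem G_step_congr {K : Set V → ℕ} {G : (S : Set V) → ZMod (K S) → V}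
    {S T : Set V} (hST : S = T) (j : ZMod (K S)) (i : ZMod (K T))
    (hji : G S j = G T i) (hinj : Function.Injective (G T)) :
    G S (j + 1) = G T (i + 1) := by
  subst hST
  rw [hinj hji]

theorem nxt_cycle {R : V → V → Prop} (C : Set V) {K : Set V → ℕ}
    {G : (S : Set V) → ZMod (K S) → V} {S : Set V} (hS : SinkSCC R S)
    (hinj : Function.Injective (G S)) (hmem : ∀ i, G S i ∈ S) (i : ZMod (K S)) :
    nxt R C K G (G S i) = G S (i + 1) := by
  have heq : Reach5 R (G S i) = S := sinkSCC_reach_eq hS (hmem i)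
  have h1 : SinkSCC R (Reach5 R (G S i)) ∧ ∃ j, G (Reach5 R (G S i)) j = G S i := by
    rw [heq]; exact ⟨hS, i, rfl⟩
  rw [nxt_pos h1]
  exact G_step_congr heq (Classical.choose h1.2) i (Classical.choose_spec h1.2) hinj

theorem nxt_desc {R : V → V → Prop} {C : Set V} {K : Set V → ℕ}
    {G : (S : Set V) → ZMod (K S) → V} {v : V}
    (hnc : ¬(SinkSCC R (Reach5 R v) ∧ ∃ i, G (Reach5 R v) i = v))
    (h2 : ∃ w, R v w ∧ dC R C w < dC R C v) :
    R v (nxt R C K G v) ∧ dC R C (nxt R C K G v) < dC R C v := by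
  unfold nxt
  rw [dif_neg hnc, dif_pos h2]
  exact Classical.choose_spec h2

theorem nxt_edge {R : V → V → Prop} {C : Set V} {K : Set V → ℕ}
    {G : (S : Set V) → ZMod (K S) → V}
    (hG : ∀ S : Set V, SinkSCC R S → ∀ i, R (G S i) (G S (i + 1)))
    {v : V} (hdom : ∃ b, R v b) : R v (nxt R C K G v) := by
  by_cases h1 : SinkSCC R (Reach5 R v) ∧ ∃ i, G (Reach5 R v) i = v
  · rw [nxt_pos h1]
    have hcs := Classical.choose_spec h1.2
    have := hG _ h1.1 (Classical.choose h1.2)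
    rwa [hcs] at this
  · by_cases h2 : ∃ w, R v w ∧ dC R C w < dC R C v
    · exact (nxt_desc h1 h2).1
    · rw [nxt_neg3 h1 h2 hdom]
      exact Classical.choose_spec hdom

theorem exists_sink [Fintype V] (R : V → V → Prop) (a : V)
    (h : ∀ w ∈ Reach5 R a, ∃ b, R w b) : ∃ x ∈ Reach5 R a, SinkSCC R (Reach5 R x) := by
  classical
  obtain ⟨x, hx, hmin⟩ := Finset.exists_min_image ((Reach5 R a).toFinite.toFinset)
    (fun v => (Reach5 R v).toFinite.toFinset.card)
    ⟨a, (Set.Finite.mem_toFinset _).mpr (reach5_self R a)⟩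
  rw [Set.Finite.mem_toFinset] at hx
  refine ⟨x, hx, ⟨x, reach5_self R x⟩, ?_, fun b hb => h b (reach5_trans hx hb),
    fun b hb c hc => hb.tail hc⟩
  intro y hy z hz
  by_contra hyz
  have hsub : Reach5 R y ⊆ Reach5 R x := fun w hw => reach5_trans hy hw
  have hss : Reach5 R y ⊂ Reach5 R x := ⟨hsub, fun hrev => hyz (hrev hz)⟩
  have hcard : (Reach5 R y).toFinite.toFinset.card < (Reach5 R x).toFinite.toFinset.card :=
    Finset.card_lt_card (by rwa [Set.Finite.toFinset_ssubset_toFinset])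
  have := hmin y ((Set.Finite.mem_toFinset _).mpr (reach5_trans hx hy))
  omega

theorem repair_iff {R D : V → V → Prop} :
    Repair R D ↔ (∀ a b, D a b → R a b) ∧ Consistent D ∧ ∀ a, (∃ b, R a b) → ∃ b, D a b := by
  constructor
  · rintro ⟨hsub, hcons, hmax⟩
    refine ⟨hsub, hcons, fun a ha => ?_⟩
    obtain ⟨b0, hb0⟩ := ha
    by_contra hno
    push_neg at hno
    have hD' := hmax (fun x y => D x y ∨ (x = a ∧ y = b0)) ?_ ?_ ?_
    · have : D a b0 := by rw [← hD']; exact Or.inr ⟨rfl, rfl⟩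
      exact hno b0 this
    · rintro x y y' (hxy | ⟨rfl, rfl⟩) (hxy' | ⟨hx2, rfl⟩)
      · exact hcons x y y' hxy hxy'
      · subst hx2; exact absurd hxy (hno y)
      · exact absurd hxy' (hno y')
      · rfl
    · exact fun x y hxy => Or.inl hxy
    · rintro x y (hxy | ⟨rfl, rfl⟩)
      · exact hsub x y hxy
      · exact hb0
  · rintro ⟨hsub, hcons, hcov⟩
    refine ⟨hsub, hcons, fun D' hcons' hDD' hD'R => ?_⟩
    funext a b
    apply propext
    constructor
    · intro h
      obtain ⟨b', hb'⟩ := hcov a ⟨b, hD'R a b h⟩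
      have := hcons' a b b' h (hDD' a b' hb')
      rwa [this]
    · exact hDD' a b

theorem repair_of_fun {R : V → V → Prop} (f : V → V) (hf : ∀ a, (∃ b, R a b) → R a (f a)) :
    Repair R (fun a b => (∃ c, R a c) ∧ b = f a) := by
  rw [repair_iff]
  exact ⟨fun a b hab => hab.2 ▸ hf a hab.1,
    fun a b b' h1 h2 => h1.2.trans h2.2.symm,
    fun a h => ⟨f a, h, rfl⟩⟩

end Aux

theorem key5 {V : Type*} [Fintype V] [Nonempty V] (n : ℕ) (hn : 1 ≤ n) (R : V → V → Prop)
    (hbad : ∀ S : Set V, SinkSCC R S → ∃ (k : ℕ) (g : ZMod k → V),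
      1 ≤ k ∧ ¬k ∣ n ∧ IsSimpleCycle R k g ∧ ∀ i, g i ∈ S) :
    ∃ D : V → V → Prop, Repair R D ∧ ∀ g : ZMod n → V, ¬IsClosedWalk D n g := by
  classical
  have hbad' : ∀ S : Set V, ∃ (k : ℕ) (g : ZMod k → V), SinkSCC R S →
      1 ≤ k ∧ ¬k ∣ n ∧ IsSimpleCycle R k g ∧ ∀ i, g i ∈ S := by
    intro S
    by_cases hS : SinkSCC R S
    · obtain ⟨k, g, h⟩ := hbad S hS
      exact ⟨k, g, fun _ => h⟩
    · exact ⟨1, fun _ => Classical.arbitrary V, fun h => absurd h hS⟩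
  choose K G spec using hbad'
  set C : Set V :=
    {v | (¬∃ b, R v b) ∨ (SinkSCC R (Reach5 R v) ∧ ∃ i, G (Reach5 R v) i = v)} with hC
  have hreach : ∀ v : V, ∃ m, ReachIn R C m v := by
    intro v
    by_cases hw : ∃ w ∈ Reach5 R v, ¬∃ b, R w b
    · obtain ⟨w, hw1, hw2⟩ := hw
      exact reachIn_of_rtg hw1 (by rw [hC]; exact Or.inl hw2)
    · push_neg at hw
      obtain ⟨x, hxv, hS⟩ := exists_sink R v hw
      obtain ⟨hk1, hknd, hcyc, hmem⟩ := spec (Reach5 R x) hS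
      have hux : G (Reach5 R x) 0 ∈ Reach5 R x := hmem 0
      have heq : Reach5 R (G (Reach5 R x) 0) = Reach5 R x := sinkSCC_reach_eq hS hux
      have huC : G (Reach5 R x) 0 ∈ C := by
        rw [hC]
        refine Or.inr ?_
        rw [heq]
        exact ⟨hS, 0, rfl⟩
      exact reachIn_of_rtg (reach5_trans hxv hux) huC
  have hfR : ∀ a, (∃ b, R a b) → R a (nxt R C K G a) := by
    intro a ha
    exact nxt_edge (fun S hS i => ((spec S hS).2.2.1).2 i) ha
  refine ⟨fun a b => (∃ c, R a c) ∧ b = nxt R C K G a, repair_of_fun _ hfR, ?_⟩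
  intro g hg
  have hstep : ∀ i : ZMod n, g (i + 1) = nxt R C K G (g i) := fun i => (hg i).2
  have hdomg : ∀ i : ZMod n, ∃ c, R (g i) c := fun i => (hg i).1
  have hu : ∀ j : ℕ, g (j : ZMod n) = (nxt R C K G)^[j] (g 0) := by
    intro j
    induction j with
    | zero => simp
    | succ m ih =>
      rw [Nat.cast_succ, hstep, ih, Function.iterate_succ_apply']
  have hfn : (nxt R C K G)^[n] (g 0) = g 0 := by
    have h0 := hu n
    rwa [ZMod.natCast_self, eq_comm] at h0
  have hdom : ∀ j : ℕ, ∃ c, R ((nxt R C K G)^[j] (g 0)) c := by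
    intro j
    have := hdomg (j : ZMod n)
    rwa [hu j] at this
  by_cases hcase : ∃ j : ℕ, SinkSCC R (Reach5 R ((nxt R C K G)^[j] (g 0))) ∧
      ∃ i, G (Reach5 R ((nxt R C K G)^[j] (g 0))) i = (nxt R C K G)^[j] (g 0)
  · obtain ⟨j, hS, i0, hi0⟩ := hcase
    obtain ⟨hk1, hknd, ⟨hinj, hedge⟩, hmem⟩ := spec (Reach5 R ((nxt R C K G)^[j] (g 0))) hS
    have horbit : ∀ m : ℕ, (nxt R C K G)^[m] ((nxt R C K G)^[j] (g 0)) =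
        G (Reach5 R ((nxt R C K G)^[j] (g 0))) (i0 + (m : ZMod (K (Reach5 R ((nxt R C K G)^[j] (g 0)))))) := by
      intro m
      induction m with
      | zero => simp [hi0]
      | succ m ih =>
        rw [Function.iterate_succ_apply', ih, nxt_cycle C hS hinj hmem, Nat.cast_succ,
          add_assoc]
    have h2 : (nxt R C K G)^[n] ((nxt R C K G)^[j] (g 0)) = (nxt R C K G)^[j] (g 0) := by
      rw [← Function.iterate_add_apply, Nat.add_comm n j, Function.iterate_add_apply, hfn]
    have h3 := horbit n
    rw [h2] at h3
    have h4 := hinj (hi0.trans h3)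
    have h5 : ((n : ℕ) : ZMod (K (Reach5 R ((nxt R C K G)^[j] (g 0))))) = 0 :=
      add_eq_left.mp h4.symm
    exact hknd ((ZMod.natCast_eq_zero_iff n _).mp h5)
  · push_neg at hcase
    have hlt : ∀ j : ℕ, dC R C ((nxt R C K G)^[j+1] (g 0)) < dC R C ((nxt R C K G)^[j] (g 0)) := by
      intro j
      have hnotC : (nxt R C K G)^[j] (g 0) ∉ C := by
        rw [hC]
        intro hmem
        rcases hmem with h | h
        · exact h (hdom j)
        · exact hcase j h.1 h.2.choose h.2.choose_spec
      have hd := dC_step hnotC (hreach _)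
      have := nxt_desc (fun hcon => hcase j hcon.1 hcon.2.choose hcon.2.choose_spec) hd
      rw [Function.iterate_succ_apply']
      exact this.2
    have hmono : ∀ j : ℕ, dC R C ((nxt R C K G)^[j] (g 0)) + j ≤ dC R C (g 0) := by
      intro j
      induction j with
      | zero => simp
      | succ m ih =>
        have := hlt m
        omega
    have := hmono n
    rw [hfn] at this
    omega

theorem stmt5 {V : Type*} [Fintype V] (n : ℕ) (hn : 2 ≤ n) (R : V → V → Prop) :
    (∀ D : V → V → Prop, Repair R D → ∃ g : ZMod n → V, IsClosedWalk D n g) ↔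
    (∃ S : Set V, SinkSCC R S ∧ ∀ k : ℕ, 1 ≤ k → ∀ g : ZMod k → V,
      IsSimpleCycle R k g → (∀ i, g i ∈ S) → k ∣ n) := by
  classical
  constructor
  · intro hL
    by_cases hV : Nonempty V
    · by_contra hR
      push_neg at hR
      obtain ⟨D, hD, hno⟩ := key5 n (by omega) R (fun S hS => by
        obtain ⟨k, hk1, g, hcyc, hmem, hnd⟩ := hR S hS
        exact ⟨k, g, hk1, hnd, hcyc, hmem⟩)
      obtain ⟨g, hg⟩ := hL D hD
      exact hno g hg
    · obtain ⟨g, -⟩ := hL _ (repair_of_fun id (fun a _ => absurd (Nonempty.intro a) hV))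
      exact absurd ⟨g 0⟩ hV
  · rintro ⟨S, hS, hall⟩ D hD
    rw [repair_iff] at hD
    obtain ⟨hsub, hcons, hcov⟩ := hD
    set fD : V → V := fun a => if h : ∃ b, D a b then Classical.choose h else a with hfDdef
    have hfD : ∀ a ∈ S, D a (fD a) := by
      intro a ha
      have hex : ∃ b, D a b := hcov a (hS.2.2.1 a ha)
      simp only [hfDdef]
      rw [dif_pos hex]
      exact Classical.choose_spec hex
    have hSstep : ∀ a ∈ S, fD a ∈ S := fun a ha => hS.2.2.2 a ha _ (hsub _ _ (hfD a ha))
    obtain ⟨a0, ha0⟩ := hS.1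
    have horb0 : ∀ m : ℕ, fD^[m] a0 ∈ S := by
      intro m
      induction m with
      | zero => exact ha0
      | succ m ih => rw [Function.iterate_succ_apply']; exact hSstep _ ih
    obtain ⟨i, j, hij, hfij⟩ := Finite.exists_ne_map_eq_of_infinite (fun m : ℕ => fD^[m] a0)
    have hexwp : ∃ (w : V) (p : ℕ), w ∈ S ∧ 0 < p ∧ fD^[p] w = w := by
      rcases lt_or_gt_of_ne hij with hlt | hlt
      · refine ⟨fD^[i] a0, j - i, horb0 i, by omega, ?_⟩
        rw [← Function.iterate_add_apply]
        have he : j - i + i = j := by omega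
        rw [he, ← hfij]
      · refine ⟨fD^[j] a0, i - j, horb0 j, by omega, ?_⟩
        rw [← Function.iterate_add_apply]
        have he : i - j + j = i := by omega
        rw [he, hfij]
    obtain ⟨w, p, hwS, hp, hpw⟩ := hexwp
    have hex : ∃ m, 0 < m ∧ fD^[m] w = w := ⟨p, hp, hpw⟩
    set k := Nat.find hex with hkdef
    obtain ⟨hk1, hkw⟩ : 0 < k ∧ fD^[k] w = w := Nat.find_spec hex
    haveI : NeZero k := ⟨by omega⟩
    have horb : ∀ m : ℕ, fD^[m] w ∈ S := by
      intro m
      induction m with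
      | zero => exact hwS
      | succ m ih => rw [Function.iterate_succ_apply']; exact hSstep _ ih
    have hper : ∀ m : ℕ, fD^[m] w = fD^[m % k] w := by
      intro m
      induction m using Nat.strong_induction_on with
      | _ m ih =>
        by_cases hm : m < k
        · rw [Nat.mod_eq_of_lt hm]
        · have h1 : m = (m - k) + k := by omega
          rw [h1, Function.iterate_add_apply, hkw, ih (m - k) (by omega), Nat.add_mod_right]
    set h : ZMod k → V := fun i => fD^[i.val] w with hhdef
    have hedge : ∀ i : ZMod k, D (h i) (h (i + 1)) := by
      intro i
      have hmemS : h i ∈ S := horb i.val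
      have hDh : D (h i) (fD (h i)) := hfD _ hmemS
      have heq : h (i + 1) = fD (h i) := by
        show fD^[(i + 1).val] w = fD (fD^[i.val] w)
        rw [ZMod.val_add, ZMod.val_one_eq_one_mod, Nat.add_mod_mod,
          ← Function.iterate_succ_apply' fD i.val w]
        exact (hper (i.val + 1)).symm
      rw [heq]
      exact hDh
    have hinj : Function.Injective h := by
      have key2 : ∀ a b : ℕ, a < k → b < k → a ≤ b → fD^[a] w = fD^[b] w → a = b := by
        intro a b ha hb hab heq2
        by_contra hne
        have hlt : a < b := by omega
        have h5 : fD^[k - b + a] w = w := by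
          have hc := congrArg (fD^[k - b]) heq2
          rw [← Function.iterate_add_apply, ← Function.iterate_add_apply] at hc
          have hkb : k - b + b = k := by omega
          rw [hkb, hkw] at hc
          exact hc
        have h6 := Nat.find_min hex (m := k - b + a) (by omega)
        exact h6 ⟨by omega, h5⟩
      intro i j hij2
      have hlti := ZMod.val_lt i
      have hltj := ZMod.val_lt j
      have hij3 : fD^[i.val] w = fD^[j.val] w := hij2
      rcases le_total i.val j.val with hle | hle
      · exact ZMod.val_injective k (key2 _ _ hlti hltj hle hij3)
      · exact (ZMod.val_injective k (key2 _ _ hltj hlti hle hij3.symm)).symm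
    have hdvd : k ∣ n :=
      hall k hk1 h ⟨hinj, fun i => hsub _ _ (hedge i)⟩ (fun i => horb i.val)
    refine ⟨fun i => h (ZMod.castHom hdvd (ZMod k) i), fun i => ?_⟩
    have hc : (ZMod.castHom hdvd (ZMod k)) (i + 1) = (ZMod.castHom hdvd (ZMod k)) i + 1 := by
      rw [map_add, map_one]
    show D (h (ZMod.castHom hdvd (ZMod k) i)) (h (ZMod.castHom hdvd (ZMod k) (i + 1)))
    rw [hc]
    exact hedge _
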